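/- arXiv:1810.06094 — 2 statements merged into one kernel-verified Lean document; each statement's English description precedes it below -/
import Mathlib

section
/- Let s > 1/2 with 1/2 < s < 3/2. Then there exists a constant C_s > 0, depending only on s, such that for all ρ, ρ₁ > 0, ∫_{ℝ} |e^{ixρ} - e^{ixρ₁}|² / (1+|x|)^{2s} dx ≤ C_s |ρ - ρ₁|^{2s-1}. -/
/-!
Since `|e^{iθ} - e^{iθ₁}| ≤ min 2 |θ - θ₁|`, the integrand is at most
`4 min((δx)², 1) |x|^{-2s}` with `δ = |ρ - ρ₁|`. Splitting at `|x| = 1/δ`, the two pieces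
integrate to `δ^{2s-1}/(3-2s)` and `δ^{2s-1}/(2s-1)`; the bounds `s < 3/2` and `1/2 < s` are
exactly what makes the inner and outer piece finite.
-/

open MeasureTheory Real Set

lemma MeasureTheory.IntegrableOn.comp_abs {E : Type*} [NormedAddCommGroup E] {f : ℝ → E}
    (hf : IntegrableOn f (Ioi 0)) : Integrable (fun x => f |x|) := by
  have h_pos : IntegrableOn (fun x => f |x|) (Ioi 0) :=
    hf.congr_fun (fun x hx => by rw [abs_of_pos hx]) measurableSet_Ioi
  have h_neg : IntegrableOn (fun x => f |x|) (Iio 0) := by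
    rw [← neg_zero] at h_pos
    simpa only [abs_neg] using h_pos.comp_neg_Iio
  rw [← integrableOn_univ, ← Iio_union_Ici (a := (0 : ℝ))]
  exact h_neg.union (Iff.mpr integrableOn_Ici_iff_integrableOn_Ioi h_pos)

lemma norm_cexp_I_mul_sub_cexp_I_mul_le (θ θ₁ : ℝ) :
    ‖Complex.exp (Complex.I * θ) - Complex.exp (Complex.I * θ₁)‖ ≤ min 2 |θ - θ₁| := by
  refine le_min ?_ ?_
  · calc _ ≤ ‖Complex.exp (Complex.I * θ)‖ + ‖Complex.exp (Complex.I * θ₁)‖ := norm_sub_le _ _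
      _ = 2 := by simp only [mul_comm Complex.I, Complex.norm_exp_ofReal_mul_I]; norm_num
  · have h : Complex.exp (Complex.I * θ) - Complex.exp (Complex.I * θ₁) =
        Complex.exp (Complex.I * θ₁) * (Complex.exp (Complex.I * ↑(θ - θ₁)) - 1) := by
      rw [mul_sub, mul_one, ← Complex.exp_add]; push_cast; ring_nf
    rw [h, norm_mul, mul_comm Complex.I, Complex.norm_exp_ofReal_mul_I, one_mul]
    exact Real.norm_exp_I_mul_ofReal_sub_one_le

noncomputable def truncatedPowerWeight (δ p t : ℝ) : ℝ := min ((δ * t) ^ 2) 1 * t ^ (-p)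

section truncatedPowerWeight

variable {δ p : ℝ}

lemma truncatedPowerWeight_eqOn_Ioc (hδ : 0 < δ) :
    EqOn (truncatedPowerWeight δ p) (fun t => δ ^ 2 * t ^ (2 - p)) (Ioc 0 δ⁻¹) := by
  rintro t ⟨ht, htδ⟩
  have hδt : (δ * t) ^ 2 ≤ 1 := by
    refine pow_le_one₀ (by positivity) ?_
    calc δ * t ≤ δ * δ⁻¹ := by gcongr
      _ = 1 := mul_inv_cancel₀ hδ.ne'
  rw [truncatedPowerWeight, min_eq_left hδt]
  simp only [sub_eq_add_neg, rpow_add ht, rpow_two]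
  ring

lemma truncatedPowerWeight_eqOn_Ioi (hδ : 0 < δ) :
    EqOn (truncatedPowerWeight δ p) (fun t => t ^ (-p)) (Ioi δ⁻¹) := by
  intro t ht
  have hδt : 1 ≤ (δ * t) ^ 2 := by
    refine one_le_pow₀ ?_
    calc 1 = δ * δ⁻¹ := (mul_inv_cancel₀ hδ.ne').symm
      _ ≤ δ * t := by gcongr; exact le_of_lt ht
  rw [truncatedPowerWeight, min_eq_right hδt, one_mul]

lemma integrableOn_Ioc_truncatedPowerWeight (hδ : 0 < δ) (hp : p < 3) :
    IntegrableOn (truncatedPowerWeight δ p) (Ioc 0 δ⁻¹) := by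
  have h := intervalIntegral.intervalIntegrable_rpow' (a := 0) (b := δ⁻¹) (r := 2 - p)
    (by linarith)
  rw [intervalIntegrable_iff_integrableOn_Ioc_of_le (by positivity)] at h
  exact IntegrableOn.congr_fun (h.const_mul (δ ^ 2)) (truncatedPowerWeight_eqOn_Ioc hδ).symm
    measurableSet_Ioc

lemma integral_Ioc_truncatedPowerWeight (hδ : 0 < δ) (hp : p < 3) :
    ∫ t in Ioc 0 δ⁻¹, truncatedPowerWeight δ p t = δ ^ (p - 1) / (3 - p) := by
  rw [setIntegral_congr_fun measurableSet_Ioc (truncatedPowerWeight_eqOn_Ioc hδ),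
    ← intervalIntegral.integral_of_le (by positivity), intervalIntegral.integral_const_mul,
    integral_rpow (Or.inl (by linarith)), zero_rpow (by linarith), sub_zero,
    inv_rpow hδ.le, ← rpow_neg hδ.le, ← mul_div_assoc, ← rpow_two, ← rpow_add hδ]
  ring_nf

lemma integrableOn_Ioi_truncatedPowerWeight (hδ : 0 < δ) (hp : 1 < p) :
    IntegrableOn (truncatedPowerWeight δ p) (Ioi δ⁻¹) :=
  (integrableOn_Ioi_rpow_of_lt (by linarith) (by positivity)).congr_fun
    (truncatedPowerWeight_eqOn_Ioi hδ).symm measurableSet_Ioi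

lemma integral_Ioi_truncatedPowerWeight (hδ : 0 < δ) (hp : 1 < p) :
    ∫ t in Ioi δ⁻¹, truncatedPowerWeight δ p t = δ ^ (p - 1) / (p - 1) := by
  rw [setIntegral_congr_fun measurableSet_Ioi (truncatedPowerWeight_eqOn_Ioi hδ),
    integral_Ioi_rpow_of_lt (by linarith) (by positivity), inv_rpow hδ.le, ← rpow_neg hδ.le,
    neg_add_eq_sub, ← neg_sub, neg_div_neg_eq, neg_neg]

lemma truncatedPowerWeight_zero_left : truncatedPowerWeight 0 p = 0 := by
  ext t
  simp [truncatedPowerWeight]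

lemma integrableOn_Ioi_zero_truncatedPowerWeight (hδ : 0 ≤ δ) (hp₁ : 1 < p) (hp₃ : p < 3) :
    IntegrableOn (truncatedPowerWeight δ p) (Ioi 0) := by
  rcases hδ.eq_or_lt with rfl | hδ
  · rw [truncatedPowerWeight_zero_left]
    exact integrableOn_zero
  rw [← Ioc_union_Ioi_eq_Ioi (inv_pos.2 hδ).le]
  exact (integrableOn_Ioc_truncatedPowerWeight hδ hp₃).union
    (integrableOn_Ioi_truncatedPowerWeight hδ hp₁)

lemma integral_Ioi_zero_truncatedPowerWeight (hδ : 0 ≤ δ) (hp₁ : 1 < p) (hp₃ : p < 3) :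
    ∫ t in Ioi 0, truncatedPowerWeight δ p t = δ ^ (p - 1) * (1 / (3 - p) + 1 / (p - 1)) := by
  rcases hδ.eq_or_lt with rfl | hδ
  · simp [truncatedPowerWeight_zero_left, zero_rpow (sub_pos.2 hp₁).ne']
  rw [← Ioc_union_Ioi_eq_Ioi (inv_pos.2 hδ).le,
    setIntegral_union (Ioc_disjoint_Ioi le_rfl) measurableSet_Ioi
      (integrableOn_Ioc_truncatedPowerWeight hδ hp₃) (integrableOn_Ioi_truncatedPowerWeight hδ hp₁),
    integral_Ioc_truncatedPowerWeight hδ hp₃, integral_Ioi_truncatedPowerWeight hδ hp₁]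
  ring

end truncatedPowerWeight

lemma sq_norm_cexp_sub_cexp_div_le (x ρ ρ₁ : ℝ) {p : ℝ} (hp : 0 ≤ p) :
    ‖Complex.exp (Complex.I * x * ρ) - Complex.exp (Complex.I * x * ρ₁)‖ ^ 2 / (1 + |x|) ^ p ≤
      4 * truncatedPowerWeight |ρ - ρ₁| p |x| := by
  rcases eq_or_ne x 0 with rfl | hx
  · simp [truncatedPowerWeight]
  have h := norm_cexp_I_mul_sub_cexp_I_mul_le (x * ρ) (x * ρ₁)
  push_cast [← mul_assoc, ← mul_sub, abs_mul] at h
  have hsq : ‖Complex.exp (Complex.I * x * ρ) - Complex.exp (Complex.I * x * ρ₁)‖ ^ 2 ≤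
      4 * min ((|ρ - ρ₁| * |x|) ^ 2) 1 := by
    have h₂ := h.trans (min_le_left _ _)
    have hδx := h.trans (min_le_right _ _)
    have hnn := norm_nonneg (Complex.exp (Complex.I * x * ρ) - Complex.exp (Complex.I * x * ρ₁))
    rcases le_total ((|ρ - ρ₁| * |x|) ^ 2) 1 with h₁ | h₁
    · rw [min_eq_left h₁]; nlinarith
    · rw [min_eq_right h₁]; nlinarith
  have hx₀ : 0 < |x| := abs_pos.2 hx
  calc _ ≤ 4 * min ((|ρ - ρ₁| * |x|) ^ 2) 1 / |x| ^ p :=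
        div_le_div₀ (by positivity) hsq (by positivity)
          (rpow_le_rpow hx₀.le (by linarith) hp)
    _ = 4 * truncatedPowerWeight |ρ - ρ₁| p |x| := by
        rw [truncatedPowerWeight, rpow_neg hx₀.le]; ring

theorem stmt_0 (s : ℝ) (hs : 1/2 < s) (hs' : s < 3/2) :
    ∃ C : ℝ, 0 < C ∧ ∀ ρ ρ₁ : ℝ, 0 < ρ → 0 < ρ₁ →
      (∫ x : ℝ, ‖Complex.exp (Complex.I * (x : ℂ) * (ρ : ℂ)) -
          Complex.exp (Complex.I * (x : ℂ) * (ρ₁ : ℂ))‖ ^ 2 / (1 + |x|) ^ (2 * s))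
        ≤ C * |ρ - ρ₁| ^ (2 * s - 1) := by
  have hp₁ : 1 < 2 * s := by linarith
  have hp₃ : 2 * s < 3 := by linarith
  refine ⟨8 * (1 / (3 - 2 * s) + 1 / (2 * s - 1)),
    mul_pos (by norm_num) (add_pos (one_div_pos.2 (by linarith)) (one_div_pos.2 (by linarith))),
    fun ρ ρ₁ _ _ => ?_⟩
  have hδ := abs_nonneg (ρ - ρ₁)
  calc _ ≤ ∫ x : ℝ, 4 * truncatedPowerWeight |ρ - ρ₁| (2 * s) |x| :=
        integral_mono_of_nonneg (ae_of_all _ fun x => by positivity)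
          ((integrableOn_Ioi_zero_truncatedPowerWeight hδ hp₁ hp₃).comp_abs.const_mul 4)
          (ae_of_all _ fun x => sq_norm_cexp_sub_cexp_div_le x ρ ρ₁ (by linarith))
    _ = 8 * (1 / (3 - 2 * s) + 1 / (2 * s - 1)) * |ρ - ρ₁| ^ (2 * s - 1) := by
        rw [integral_comp_abs (f := fun t => 4 * truncatedPowerWeight |ρ - ρ₁| (2 * s) t),
          integral_const_mul, integral_Ioi_zero_truncatedPowerWeight hδ hp₁ hp₃]
        ring
end

section
/- For s = 3/2, there exists a constant C > 0 such that for all ρ, ρ₁ > 0, ∫_{ℝ} |e^{ixρ} - e^{ixρ₁}|² / (1+|x|)³ dx ≤ C |ρ - ρ₁|² (1 + |ln|ρ - ρ₁||). -/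
/-! Write `d = |ρ - ρ₁|`. Since `|e^{ia} - e^{ib}| ≤ min 2 |a - b|`, the integrand is at most
`min 4 (d x)² / (1 + |x|)³`. Split the half-line at `1/d`: below it the majorant is at most
`d² / (1 + x)`, which integrates to `d² log (1 + 1/d)`; above it, it is at most `4 / x³`, which
integrates to `2 d²`. Finally `log (1 + 1/d) ≤ 1 + |log d|`. -/

open MeasureTheory Real Set

lemma norm_cexp_I_mul_sub_cexp_I_mul_sq_le (a b : ℝ) :
    ‖Complex.exp (Complex.I * a) - Complex.exp (Complex.I * b)‖ ^ 2 ≤ min 4 ((a - b) ^ 2) := by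
  have hfactor : Complex.exp (Complex.I * a) - Complex.exp (Complex.I * b) =
      Complex.exp (Complex.I * b) * (Complex.exp (Complex.I * ↑(a - b)) - 1) := by
    rw [mul_sub, ← Complex.exp_add, mul_one]
    push_cast
    ring_nf
  have hle_two : ‖Complex.exp (Complex.I * a) - Complex.exp (Complex.I * b)‖ ≤ 2 :=
    (norm_sub_le _ _).trans_eq (by simp only [Complex.norm_exp_I_mul_ofReal]; norm_num)
  have hle_dist : ‖Complex.exp (Complex.I * a) - Complex.exp (Complex.I * b)‖ ≤ |a - b| := by
    rw [hfactor, norm_mul, Complex.norm_exp_I_mul_ofReal, one_mul, ← Real.norm_eq_abs]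
    exact Real.norm_exp_I_mul_ofReal_sub_one_le
  refine le_min ?_ ?_
  · nlinarith [norm_nonneg (Complex.exp (Complex.I * a) - Complex.exp (Complex.I * b))]
  · rw [← sq_abs (a - b)]
    exact pow_le_pow_left₀ (norm_nonneg _) hle_dist 2

lemma integrable_inv_one_add_abs_pow_three : Integrable fun x : ℝ => ((1 + |x|) ^ 3)⁻¹ := by
  refine (integrable_one_add_norm (E := ℝ) (μ := volume) (r := 3) (by norm_num)).congr
    (ae_of_all _ fun x => ?_)
  simp only [Real.norm_eq_abs]
  rw [Real.rpow_neg (by positivity)]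
  norm_cast

lemma integral_Ioc_inv_one_add {R : ℝ} (hR : 0 ≤ R) :
    ∫ t in Ioc 0 R, (1 + t)⁻¹ = log (1 + R) := by
  rw [← intervalIntegral.integral_of_le hR,
    intervalIntegral.integral_comp_add_left (fun t => t⁻¹), add_zero,
    integral_inv_of_pos one_pos (by linarith), div_one]

lemma log_one_add_inv_le {d : ℝ} (hd : 0 < d) : log (1 + d⁻¹) ≤ 1 + |log d| := by
  rcases le_total d 1 with hd1 | hd1
  · have hsplit : log (1 + d⁻¹) = log (1 + d) - log d := by
      rw [← log_div (by positivity) hd.ne']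
      congr 1
      field_simp
      ring
    have := log_le_sub_one_of_pos (show 0 < 1 + d by positivity)
    rw [hsplit]
    linarith [neg_le_abs (log d)]
  · have := log_le_sub_one_of_pos (show 0 < 1 + d⁻¹ by positivity)
    have := inv_le_one_of_one_le₀ hd1
    linarith [abs_nonneg (log d)]

lemma integrable_min_sq_div_one_add_abs_pow_three (d : ℝ) :
    Integrable fun x : ℝ => min 4 ((d * x) ^ 2) / (1 + |x|) ^ 3 := by
  refine (integrable_inv_one_add_abs_pow_three.const_mul 4).mono'
    (Measurable.aestronglyMeasurable (by fun_prop)) (ae_of_all _ fun x => ?_)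
  rw [Real.norm_eq_abs, abs_of_nonneg (by positivity), ← div_eq_mul_inv]
  gcongr
  exact min_le_left _ _

lemma integrableOn_Ioi_min_sq_div_one_add_pow_three (d : ℝ) :
    IntegrableOn (fun t => min 4 ((d * t) ^ 2) / (1 + t) ^ 3) (Ioi 0) :=
  (integrable_min_sq_div_one_add_abs_pow_three d).integrableOn.congr_fun
    (fun t ht => by simp only [abs_of_pos (mem_Ioi.1 ht)]) measurableSet_Ioi

section

variable {d : ℝ}

lemma setIntegral_Ioc_min_sq_div_le (hd : 0 < d) :
    ∫ t in Ioc 0 d⁻¹, min 4 ((d * t) ^ 2) / (1 + t) ^ 3 ≤ d ^ 2 * log (1 + d⁻¹) := by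
  have hinv : IntegrableOn (fun t : ℝ => (1 + t)⁻¹) (Ioc 0 d⁻¹) :=
    (ContinuousOn.integrableOn_Icc <| (continuousOn_const.add continuousOn_id).inv₀
      fun t ht => by simp only [Pi.add_apply, id]; linarith [ht.1]).mono_set Ioc_subset_Icc_self
  calc ∫ t in Ioc 0 d⁻¹, min 4 ((d * t) ^ 2) / (1 + t) ^ 3
      ≤ ∫ t in Ioc 0 d⁻¹, d ^ 2 * (1 + t)⁻¹ := by
        refine setIntegral_mono_on
          ((integrableOn_Ioi_min_sq_div_one_add_pow_three d).mono_set Ioc_subset_Ioi_self)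
          (hinv.const_mul _) measurableSet_Ioc fun t ht => ?_
        have ht : 0 < t := ht.1
        rw [div_le_iff₀ (by positivity), mul_assoc, show (1 + t)⁻¹ * (1 + t) ^ 3 = (1 + t) ^ 2 by
          field_simp]
        calc min 4 ((d * t) ^ 2) ≤ (d * t) ^ 2 := min_le_right _ _
          _ ≤ d ^ 2 * (1 + t) ^ 2 := by rw [mul_pow]; gcongr; linarith
    _ = d ^ 2 * log (1 + d⁻¹) := by
        rw [integral_const_mul, integral_Ioc_inv_one_add (inv_pos.2 hd).le]

lemma setIntegral_Ioi_min_sq_div_le (hd : 0 < d) :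
    ∫ t in Ioi d⁻¹, min 4 ((d * t) ^ 2) / (1 + t) ^ 3 ≤ 2 * d ^ 2 := by
  have hR : 0 < d⁻¹ := inv_pos.2 hd
  calc ∫ t in Ioi d⁻¹, min 4 ((d * t) ^ 2) / (1 + t) ^ 3
      ≤ ∫ t in Ioi d⁻¹, 4 * t ^ (-3 : ℝ) := by
        refine setIntegral_mono_on
          ((integrableOn_Ioi_min_sq_div_one_add_pow_three d).mono_set (Ioi_subset_Ioi hR.le))
          ((integrableOn_Ioi_rpow_of_lt (by norm_num) hR).const_mul 4) measurableSet_Ioi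
          fun t ht => ?_
        have ht : 0 < t := hR.trans ht
        rw [rpow_neg ht.le, ← div_eq_mul_inv]
        norm_cast
        gcongr
        · exact min_le_left _ _
        · linarith
    _ = 2 * d ^ 2 := by
        rw [integral_const_mul, integral_Ioi_rpow_of_lt (by norm_num) hR]
        norm_num
        ring

lemma integral_min_sq_div_one_add_abs_pow_three_le (hd : 0 < d) :
    ∫ x : ℝ, min 4 ((d * x) ^ 2) / (1 + |x|) ^ 3 ≤ 6 * d ^ 2 * (1 + |log d|) := by
  have hint := integrableOn_Ioi_min_sq_div_one_add_pow_three d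
  have hsplit := setIntegral_union Ioc_disjoint_Ioi_same measurableSet_Ioi
    (hint.mono_set Ioc_subset_Ioi_self) (hint.mono_set (Ioi_subset_Ioi (inv_pos.2 hd).le))
  rw [Ioc_union_Ioi_eq_Ioi (inv_pos.2 hd).le] at hsplit
  have hhead := setIntegral_Ioc_min_sq_div_le hd
  have htail := setIntegral_Ioi_min_sq_div_le hd
  have hlog := log_one_add_inv_le hd
  calc ∫ x : ℝ, min 4 ((d * x) ^ 2) / (1 + |x|) ^ 3
      = ∫ x : ℝ, min 4 ((d * |x|) ^ 2) / (1 + |x|) ^ 3 := by simp_rw [mul_pow, sq_abs]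
    _ = 2 * ∫ t in Ioi 0, min 4 ((d * t) ^ 2) / (1 + t) ^ 3 :=
        integral_comp_abs (f := fun t => min 4 ((d * t) ^ 2) / (1 + t) ^ 3)
    _ ≤ 2 * (d ^ 2 * (1 + |log d|) + 2 * d ^ 2) := by
        rw [hsplit]
        gcongr
        exact hhead.trans (by gcongr)
    _ ≤ 6 * d ^ 2 * (1 + |log d|) := by nlinarith [abs_nonneg (log d), sq_nonneg d]

end

theorem stmt_2 :
    ∃ C : ℝ, 0 < C ∧ ∀ ρ ρ₁ : ℝ, 0 < ρ → 0 < ρ₁ →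
      (∫ x : ℝ, ‖Complex.exp (Complex.I * (x : ℂ) * (ρ : ℂ)) -
          Complex.exp (Complex.I * (x : ℂ) * (ρ₁ : ℂ))‖ ^ 2 / (1 + abs x) ^ 3)
        ≤ C * abs (ρ - ρ₁) ^ 2 * (1 + abs (Real.log (abs (ρ - ρ₁)))) := by
  refine ⟨6, by norm_num, fun ρ ρ₁ _ _ => ?_⟩
  rcases eq_or_ne ρ ρ₁ with rfl | hne
  · simp
  have hbound (x : ℝ) : ‖Complex.exp (Complex.I * x * ρ) - Complex.exp (Complex.I * x * ρ₁)‖ ^ 2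
      / (1 + |x|) ^ 3 ≤ min 4 ((|ρ - ρ₁| * x) ^ 2) / (1 + |x|) ^ 3 := by
    have h := norm_cexp_I_mul_sub_cexp_I_mul_sq_le (x * ρ) (x * ρ₁)
    rw [show (x * ρ - x * ρ₁) ^ 2 = (|ρ - ρ₁| * x) ^ 2 by rw [mul_pow, sq_abs]; ring] at h
    push_cast at h
    simp_rw [mul_assoc]
    gcongr
  calc _ ≤ ∫ x : ℝ, min 4 ((|ρ - ρ₁| * x) ^ 2) / (1 + |x|) ^ 3 :=
        integral_mono_of_nonneg (ae_of_all _ fun x => by positivity)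
          (integrable_min_sq_div_one_add_abs_pow_three _) (ae_of_all _ hbound)
    _ ≤ _ := integral_min_sq_div_one_add_abs_pow_three_le (abs_pos.2 (sub_ne_zero.2 hne))
end
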